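/- Let Λ be a finite set and B ⊆ Λ×Λ a set of oriented bonds such that the directed graph (Λ,B) is connected and supports a height function, i.e. a map l : Λ → ℤ with l(y) = l(x)+1 for every (x,y) ∈ B. Fix 1 < Δ < ∞, let q ∈ (0,1) solve Δ = (q+q⁻¹)/2, and set A(Δ) = √(1−Δ⁻²). For a configuration σ = (σ_x)_{x∈Λ} of unit vectors in ℝ³ define the classical kink energy H(σ) = Σ_{(x,y)∈B} [1 − σ_x³σ_y³ − Δ⁻¹(σ_x¹σ_y¹ + σ_x²σ_y²) + A(Δ)(σ_x³ − σ_y³)]. Then: (i) the map M(τ) = Σ_{x∈Λ} (1 − q^{2l(x)}τ)/(1 + q^{2l(x)}τ) is a continuous, strictly decreasing bijection from (0,∞) onto (−|Λ|, |Λ|); (ii) for every M ∈ (−|Λ|,|Λ|) and every φ ∈ ℝ, letting τ be the unique positive real with M(τ) = M, the configuration σ_x = σ_x³ e₃ + √(1−(σ_x³)²)(cos φ · e₁ + sin φ · e₂) with σ_x³ = (1 − q^{2l(x)}τ)/(1 + q^{2l(x)}τ) satisfies H(σ) = 0 and Σ_{x∈Λ} σ_x³ = M; (iii) conversely, every configuration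 of unit vectors with H(σ) = 0 and Σ_x σ_x³ = M ∈ (−|Λ|,|Λ|) is of this form for some φ ∈ ℝ, and the only configurations with H(σ) = 0 and Σ_x σ_x³ = ±|Λ| are the constant configurations σ_x ≡ ±e₃. -/

import Mathlib

noncomputable section

namespace S0

/-- Classical kink energy `H(σ)` of a configuration of 3d spins on the directed graph with
oriented bond set `B` (components: `0 ↔ σ¹`, `1 ↔ σ²`, `2 ↔ σ³`). -/
def energy (Δ A : ℝ) {Λ : Type*} (B : Finset (Λ × Λ)) (σ : Λ → Fin 3 → ℝ) : ℝ :=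
  ∑ p ∈ B, (1 - σ p.1 2 * σ p.2 2 - Δ⁻¹ * (σ p.1 0 * σ p.2 0 + σ p.1 1 * σ p.2 1)
      + A * (σ p.1 2 - σ p.2 2))

/-- The third-component profile `s = (1 − q^{2l}τ)/(1 + q^{2l}τ)`. -/
def sprof (q τ : ℝ) (l : ℤ) : ℝ := (1 - q ^ (2 * l) * τ) / (1 + q ^ (2 * l) * τ)

/-- The kink configuration `σ_x = σ_x³ e₃ + √(1−(σ_x³)²)(cos φ e₁ + sin φ e₂)` with
`σ_x³ = sprof q τ (l x)`. -/
def confOf (q τ φ : ℝ) {Λ : Type*} (l : Λ → ℤ) (x : Λ) : Fin 3 → ℝ :=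
  ![Real.sqrt (1 - sprof q τ (l x) ^ 2) * Real.cos φ,
    Real.sqrt (1 - sprof q τ (l x) ^ 2) * Real.sin φ,
    sprof q τ (l x)]

/-- The magnetization map `M(τ) = Σ_{x∈Λ} (1 − q^{2l(x)}τ)/(1 + q^{2l(x)}τ)`. -/
def Mfun (q : ℝ) {Λ : Type*} [Fintype Λ] (l : Λ → ℤ) (τ : ℝ) : ℝ := ∑ x, sprof q τ (l x)

end S0

/-!
With `Δ⁻¹ = 2q/(1+q²)` and `A = (1-q²)/(1+q²)`, `(1+q²)` times the energy of a bond `(u, v)` of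
unit vectors with third components `s, t` equals
`2q (√(1-s²)√(1-t²) - (u¹v¹ + u²v²)) + (q √((1-s)(1+t)) - √((1+s)(1-t)))²`,
a Cauchy–Schwarz defect in the transverse plane plus an AM–GM defect. Hence `H ≥ 0`, and
`H(σ) = 0` forces on every bond parallel transverse components and
`q² (1-s)(1+t) = (1+s)(1-t)`. Thanks to the height function the point
`[1 - σ_x³ : q^{2l(x)} (1 + σ_x³)]` of the projective line is then constant on the connected
graph: it is `[0 : 1]` or `[1 : 0]` (all spins at one pole), or `1 - σ_x³ = q^{2l(x)} τ (1 + σ_x³)`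
for one `τ > 0`, which is the kink profile, the transverse parts sharing one angle `φ`.
The magnetization is a sum of strictly decreasing Möbius functions of `τ`, running from `|Λ|` at
`τ = 0` to `-|Λ|` at `τ = ∞`.
-/

namespace S0

open Filter Topology Set Real

section Profile

variable {q τ : ℝ}

lemma sprof_eq_iff {s : ℝ} {l : ℤ} (h : 1 + q ^ (2 * l) * τ ≠ 0) :
    s = sprof q τ l ↔ 1 - s = q ^ (2 * l) * τ * (1 + s) := by
  rw [sprof, eq_div_iff h]
  constructor <;> intro _ <;> linarith

lemma sprof_mem_Ioo (hq : 0 < q) (hτ : 0 < τ) (l : ℤ) : sprof q τ l ∈ Ioo (-1) 1 := by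
  have hc : 0 < q ^ (2 * l) * τ := by positivity
  rw [mem_Ioo, sprof, lt_div_iff₀ (by linarith), div_lt_one (by linarith)]
  constructor <;> linarith

lemma sprof_strictAntiOn (hq : 0 < q) (l : ℤ) : StrictAntiOn (fun τ => sprof q τ l) (Ioi 0) := by
  intro τ₁ h₁ τ₂ h₂ h₁₂
  have hc : 0 < q ^ (2 * l) := by positivity
  have : 0 < q ^ (2 * l) * τ₁ := mul_pos hc h₁
  simp only [sprof]
  rw [div_lt_div_iff₀ (by nlinarith) (by linarith)]
  nlinarith

lemma tendsto_sprof_atTop (hq : 0 < q) (l : ℤ) :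
    Tendsto (fun τ => sprof q τ l) atTop (𝓝 (-1)) := by
  have hc : 0 < q ^ (2 * l) := by positivity
  have hden : Tendsto (fun τ => 1 + q ^ (2 * l) * τ) atTop atTop :=
    tendsto_atTop_add_const_left _ _ (tendsto_id.const_mul_atTop hc)
  have : Tendsto (fun τ => 2 / (1 + q ^ (2 * l) * τ) - 1) atTop (𝓝 (0 - 1)) :=
    (tendsto_const_nhds.div_atTop hden).sub_const 1
  rw [zero_sub] at this
  refine this.congr' ?_
  filter_upwards [eventually_ge_atTop 0] with τ hτ
  have : 0 < 1 + q ^ (2 * l) * τ := by positivity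
  rw [sprof]
  field_simp
  ring

end Profile

section Magnetization

variable {Λ : Type*} [Fintype Λ] {q : ℝ} {l : Λ → ℤ}

lemma card_eq_sum_one : (Fintype.card Λ : ℝ) = ∑ _x : Λ, (1 : ℝ) := by simp

lemma Mfun_zero : Mfun q l 0 = Fintype.card Λ := by simp [Mfun, sprof]

lemma Mfun_continuousOn (hq : 0 < q) : ContinuousOn (Mfun q l) (Ici 0) := by
  refine continuousOn_finsetSum _ fun x _ => ?_
  have : 0 < q ^ (2 * l x) := by positivity
  exact ContinuousOn.div (by fun_prop) (by fun_prop) fun τ (hτ : 0 ≤ τ) => by positivity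

lemma Mfun_surjOn (hq : 0 < q) :
    SurjOn (Mfun q l) (Ioi 0) (Ioo (-(Fintype.card Λ : ℝ)) (Fintype.card Λ)) := by
  have hbot : Tendsto (Mfun q l) atTop (𝓝 (-(Fintype.card Λ : ℝ))) := by
    rw [card_eq_sum_one, ← Finset.sum_neg_distrib]
    exact tendsto_finsetSum _ fun x _ => tendsto_sprof_atTop hq (l x)
  have htop : Tendsto (Mfun q l) (𝓝[>] 0) (𝓝 (Fintype.card Λ)) := by
    rw [← Mfun_zero]
    exact ((Mfun_continuousOn hq).continuousWithinAt self_mem_Ici).mono Ioi_subset_Ici_self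
  exact isPreconnected_Ioi.intermediate_value_Ioo (le_principal_iff.mpr (Ioi_mem_atTop 0))
    (le_principal_iff.mpr self_mem_nhdsWithin)
    ((Mfun_continuousOn hq).mono Ioi_subset_Ici_self) hbot htop

variable [Nonempty Λ]

lemma Mfun_strictAntiOn (hq : 0 < q) : StrictAntiOn (Mfun q l) (Ioi 0) :=
  fun _ h₁ _ h₂ h₁₂ => Finset.sum_lt_sum_of_nonempty Finset.univ_nonempty
    fun x _ => sprof_strictAntiOn hq (l x) h₁ h₂ h₁₂

lemma Mfun_mem_Ioo (hq : 0 < q) {τ : ℝ} (hτ : 0 < τ) :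
    Mfun q l τ ∈ Ioo (-(Fintype.card Λ : ℝ)) (Fintype.card Λ) := by
  rw [card_eq_sum_one, ← Finset.sum_neg_distrib]
  exact ⟨Finset.sum_lt_sum_of_nonempty Finset.univ_nonempty
      fun x _ => (sprof_mem_Ioo hq hτ (l x)).1,
    Finset.sum_lt_sum_of_nonempty Finset.univ_nonempty fun x _ => (sprof_mem_Ioo hq hτ (l x)).2⟩

lemma Mfun_bijOn (hq : 0 < q) :
    BijOn (Mfun q l) (Ioi 0) (Ioo (-(Fintype.card Λ : ℝ)) (Fintype.card Λ)) :=
  ⟨fun _ hτ => Mfun_mem_Ioo hq hτ, (Mfun_strictAntiOn hq).injOn, Mfun_surjOn hq⟩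

end Magnetization

section Plane

variable {a₁ b₁ r₁ a₂ b₂ r₂ : ℝ}

lemma add_mul_le_mul_of_sq_add_sq (h₁ : a₁ ^ 2 + b₁ ^ 2 = r₁ ^ 2) (h₂ : a₂ ^ 2 + b₂ ^ 2 = r₂ ^ 2)
    (hr₁ : 0 ≤ r₁) (hr₂ : 0 ≤ r₂) : a₁ * a₂ + b₁ * b₂ ≤ r₁ * r₂ := by
  have lagrange : (r₁ * r₂) ^ 2 - (a₁ * a₂ + b₁ * b₂) ^ 2 = (a₁ * b₂ - a₂ * b₁) ^ 2 := by
    rw [mul_pow, ← h₁, ← h₂]; ring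
  exact (abs_le_of_sq_le_sq' (by nlinarith [sq_nonneg (a₁ * b₂ - a₂ * b₁)]) (by positivity)).2

lemma mul_eq_mul_of_add_mul_eq_mul (h₁ : a₁ ^ 2 + b₁ ^ 2 = r₁ ^ 2) (h₂ : a₂ ^ 2 + b₂ ^ 2 = r₂ ^ 2)
    (h : a₁ * a₂ + b₁ * b₂ = r₁ * r₂) : r₁ * a₂ = r₂ * a₁ ∧ r₁ * b₂ = r₂ * b₁ := by
  have : (r₁ * a₂ - r₂ * a₁) ^ 2 + (r₁ * b₂ - r₂ * b₁) ^ 2 = 0 := by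
    linear_combination r₁ ^ 2 * h₂ + r₂ ^ 2 * h₁ - 2 * r₁ * r₂ * h
  constructor <;> nlinarith [sq_nonneg (r₁ * a₂ - r₂ * a₁), sq_nonneg (r₁ * b₂ - r₂ * b₁)]

lemma exists_eq_mul_cos_and_eq_mul_sin {a b r : ℝ} (h : a ^ 2 + b ^ 2 = r ^ 2) (hr : 0 ≤ r) :
    ∃ φ, a = r * cos φ ∧ b = r * sin φ := by
  have hnorm : ‖(⟨a, b⟩ : ℂ)‖ = r := by
    rw [Complex.norm_eq_sqrt_sq_add_sq, h, sqrt_sq hr]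
  exact ⟨Complex.arg ⟨a, b⟩, by rw [← hnorm, Complex.norm_mul_cos_arg],
    by rw [← hnorm, Complex.norm_mul_sin_arg]⟩

end Plane

def bondEnergy (q : ℝ) (u v : Fin 3 → ℝ) : ℝ :=
  1 - u 2 * v 2 - 2 * q / (1 + q ^ 2) * (u 0 * v 0 + u 1 * v 1)
    + (1 - q ^ 2) / (1 + q ^ 2) * (u 2 - v 2)

lemma energy_eq_sum_bondEnergy {q : ℝ} (hq : 0 < q) {Λ : Type*} (B : Finset (Λ × Λ))
    (σ : Λ → Fin 3 → ℝ) :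
    energy ((q + q⁻¹) / 2) ((1 - q ^ 2) / (1 + q ^ 2)) B σ =
      ∑ p ∈ B, bondEnergy q (σ p.1) (σ p.2) := by
  have : ((q + q⁻¹) / 2)⁻¹ = 2 * q / (1 + q ^ 2) := by
    field_simp
    ring
  simp only [energy, bondEnergy, this]

lemma sqrt_one_sub_inv_sq {q : ℝ} (hq₀ : 0 < q) (hq₁ : q < 1) :
    √(1 - ((q + q⁻¹) / 2)⁻¹ ^ 2) = (1 - q ^ 2) / (1 + q ^ 2) := by
  have : 1 - ((q + q⁻¹) / 2)⁻¹ ^ 2 = ((1 - q ^ 2) / (1 + q ^ 2)) ^ 2 := by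
    field_simp
    ring
  rw [this, sqrt_sq (div_nonneg (by nlinarith) (by positivity))]

section Bond

variable {q : ℝ} {u v : Fin 3 → ℝ}

lemma third_mem_Icc (hu : u 0 ^ 2 + u 1 ^ 2 + u 2 ^ 2 = 1) : u 2 ∈ Icc (-1) 1 := by
  constructor <;> nlinarith [sq_nonneg (u 0), sq_nonneg (u 1)]

lemma one_add_sq_mul_bondEnergy (hu : u 0 ^ 2 + u 1 ^ 2 + u 2 ^ 2 = 1)
    (hv : v 0 ^ 2 + v 1 ^ 2 + v 2 ^ 2 = 1) :
    (1 + q ^ 2) * bondEnergy q u v =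
      2 * q * (√(1 - u 2 ^ 2) * √(1 - v 2 ^ 2) - (u 0 * v 0 + u 1 * v 1))
        + (q * √((1 - u 2) * (1 + v 2)) - √((1 + u 2) * (1 - v 2))) ^ 2 := by
  obtain ⟨hu₁, hu₂⟩ := third_mem_Icc hu
  obtain ⟨hv₁, hv₂⟩ := third_mem_Icc hv
  have hX : √((1 - u 2) * (1 + v 2)) ^ 2 = (1 - u 2) * (1 + v 2) :=
    sq_sqrt (mul_nonneg (by linarith) (by linarith))
  have hY : √((1 + u 2) * (1 - v 2)) ^ 2 = (1 + u 2) * (1 - v 2) :=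
    sq_sqrt (mul_nonneg (by linarith) (by linarith))
  have hXY : √((1 - u 2) * (1 + v 2)) * √((1 + u 2) * (1 - v 2)) =
      √(1 - u 2 ^ 2) * √(1 - v 2 ^ 2) := by
    rw [← sqrt_mul (mul_nonneg (by linarith) (by linarith)),
      ← sqrt_mul (by nlinarith)]
    ring_nf
  have : 1 + q ^ 2 ≠ 0 := by positivity
  have hE : (1 + q ^ 2) * bondEnergy q u v = (1 + q ^ 2) * (1 - u 2 * v 2)
      - 2 * q * (u 0 * v 0 + u 1 * v 1) + (1 - q ^ 2) * (u 2 - v 2) := by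
    rw [bondEnergy]
    field_simp
  rw [hE]
  linear_combination -q ^ 2 * hX - hY + 2 * q * hXY

lemma sq_add_sq_eq_sqrt_sq (hu : u 0 ^ 2 + u 1 ^ 2 + u 2 ^ 2 = 1) :
    u 0 ^ 2 + u 1 ^ 2 = √(1 - u 2 ^ 2) ^ 2 := by
  rw [sq_sqrt (by nlinarith [sq_nonneg (u 0), sq_nonneg (u 1)])]
  linarith

lemma bondEnergy_nonneg (hq : 0 ≤ q) (hu : u 0 ^ 2 + u 1 ^ 2 + u 2 ^ 2 = 1)
    (hv : v 0 ^ 2 + v 1 ^ 2 + v 2 ^ 2 = 1) : 0 ≤ bondEnergy q u v := by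
  have hCS := sub_nonneg.2 <| add_mul_le_mul_of_sq_add_sq (sq_add_sq_eq_sqrt_sq hu)
    (sq_add_sq_eq_sqrt_sq hv) (sqrt_nonneg _) (sqrt_nonneg _)
  have : 0 ≤ (1 + q ^ 2) * bondEnergy q u v := by
    rw [one_add_sq_mul_bondEnergy hu hv]
    positivity
  exact nonneg_of_mul_nonneg_right this (by positivity)

lemma bondEnergy_eq_zero_iff (hq : 0 < q) (hu : u 0 ^ 2 + u 1 ^ 2 + u 2 ^ 2 = 1)
    (hv : v 0 ^ 2 + v 1 ^ 2 + v 2 ^ 2 = 1) :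
    bondEnergy q u v = 0 ↔ u 0 * v 0 + u 1 * v 1 = √(1 - u 2 ^ 2) * √(1 - v 2 ^ 2) ∧
      q ^ 2 * ((1 - u 2) * (1 + v 2)) = (1 + u 2) * (1 - v 2) := by
  obtain ⟨hu₁, hu₂⟩ := third_mem_Icc hu
  obtain ⟨hv₁, hv₂⟩ := third_mem_Icc hv
  have hCS := sub_nonneg.2 <| add_mul_le_mul_of_sq_add_sq (sq_add_sq_eq_sqrt_sq hu)
    (sq_add_sq_eq_sqrt_sq hv) (sqrt_nonneg _) (sqrt_nonneg _)
  have hqX : q * √((1 - u 2) * (1 + v 2)) = √(q ^ 2 * ((1 - u 2) * (1 + v 2))) := by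
    rw [sqrt_mul (sq_nonneg q), sqrt_sq hq.le]
  rw [← mul_eq_zero_iff_left (by positivity : 1 + q ^ 2 ≠ 0), one_add_sq_mul_bondEnergy hu hv,
    add_eq_zero_iff_of_nonneg (by positivity) (sq_nonneg _), mul_eq_zero_iff_left (by positivity),
    sub_eq_zero, sq_eq_zero_iff, sub_eq_zero, hqX,
    sqrt_inj (mul_nonneg (sq_nonneg q) (mul_nonneg (by linarith) (by linarith)))
      (mul_nonneg (by linarith) (by linarith)), eq_comm]

end Bond

section Graph

variable {Λ : Type*} {B : Finset (Λ × Λ)}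

lemma mul_eq_mul_of_reflTransGen {w v : Λ → ℝ} (hne : ∀ x, w x ≠ 0 ∨ v x ≠ 0)
    (hB : ∀ p ∈ B, w p.1 * v p.2 = w p.2 * v p.1) {x y : Λ}
    (hxy : Relation.ReflTransGen (fun u v => (u, v) ∈ B ∨ (v, u) ∈ B) x y) :
    w x * v y = w y * v x := by
  induction hxy with
  | refl => rfl
  | @tail y z _ hyz ih =>
    have hyz' : w y * v z = w z * v y := by
      rcases hyz with h | h
      · exact hB _ h
      · exact (hB _ h).symm
    rcases hne y with hw | hv
    · exact mul_left_cancel₀ hw (by linear_combination w x * hyz' + w z * ih)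
    · exact mul_left_cancel₀ hv (by linear_combination v z * ih + v x * hyz')

lemma exists_forall_eq_mul_cos_and_eq_mul_sin [Nonempty Λ]
    (hconn : ∀ x y : Λ, Relation.ReflTransGen (fun u v => (u, v) ∈ B ∨ (v, u) ∈ B) x y)
    {r a b : Λ → ℝ} (hr : ∀ x, 0 < r x) (hab : ∀ x, a x ^ 2 + b x ^ 2 = r x ^ 2)
    (hB : ∀ p ∈ B, r p.1 * a p.2 = r p.2 * a p.1 ∧ r p.1 * b p.2 = r p.2 * b p.1) :
    ∃ φ, ∀ x, a x = r x * cos φ ∧ b x = r x * sin φ := by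
  obtain ⟨x₀⟩ := ‹Nonempty Λ›
  obtain ⟨φ, ha₀, hb₀⟩ := exists_eq_mul_cos_and_eq_mul_sin (hab x₀) (hr x₀).le
  refine ⟨φ, fun x => ⟨?_, ?_⟩⟩
  · have := mul_eq_mul_of_reflTransGen (fun x => Or.inl (hr x).ne') (fun p hp => (hB p hp).1)
      (hconn x₀ x)
    exact mul_left_cancel₀ (hr x₀).ne' (by rw [this, ha₀]; ring)
  · have := mul_eq_mul_of_reflTransGen (fun x => Or.inl (hr x).ne') (fun p hp => (hB p hp).2)
      (hconn x₀ x)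
    exact mul_left_cancel₀ (hr x₀).ne' (by rw [this, hb₀]; ring)

end Graph

section Kink

variable {q τ : ℝ} {Λ : Type*} {l : Λ → ℤ}

lemma zpow_two_mul_add_one (hq : 0 < q) (n : ℤ) : q ^ (2 * (n + 1)) = q ^ 2 * q ^ (2 * n) := by
  rw [mul_add, mul_one, zpow_add₀ hq.ne', mul_comm]
  norm_cast

lemma confOf_unit (hq : 0 < q) (hτ : 0 < τ) (φ : ℝ) (x : Λ) :
    confOf q τ φ l x 0 ^ 2 + confOf q τ φ l x 1 ^ 2 + confOf q τ φ l x 2 ^ 2 = 1 := by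
  obtain ⟨h₁, h₂⟩ := sprof_mem_Ioo hq hτ (l x)
  simp only [confOf, Matrix.cons_val_zero, Matrix.cons_val_one, Matrix.cons_val_two,
    Matrix.head_cons, Matrix.tail_cons, mul_pow,
    sq_sqrt (by nlinarith : 0 ≤ 1 - sprof q τ (l x) ^ 2)]
  linear_combination (1 - sprof q τ (l x) ^ 2) * cos_sq_add_sin_sq φ

lemma bondEnergy_confOf (hq : 0 < q) (hτ : 0 < τ) (φ : ℝ) {x y : Λ} (hxy : l y = l x + 1) :
    bondEnergy q (confOf q τ φ l x) (confOf q τ φ l y) = 0 := by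
  rw [bondEnergy_eq_zero_iff hq (confOf_unit hq hτ φ x) (confOf_unit hq hτ φ y)]
  simp only [confOf, Matrix.cons_val_zero, Matrix.cons_val_one, Matrix.cons_val_two,
    Matrix.head_cons, Matrix.tail_cons]
  constructor
  · linear_combination √(1 - sprof q τ (l x) ^ 2) * √(1 - sprof q τ (l y) ^ 2) *
      cos_sq_add_sin_sq φ
  · have hx := (sprof_eq_iff (by positivity)).1 (rfl : sprof q τ (l x) = _)
    have hy := (sprof_eq_iff (by positivity)).1 (rfl : sprof q τ (l y) = _)
    rw [hxy, zpow_two_mul_add_one hq] at hy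
    rw [hxy]
    linear_combination q ^ 2 * (1 + sprof q τ (l x + 1)) * hx - (1 + sprof q τ (l x)) * hy

lemma energy_confOf (hq : 0 < q) (hτ : 0 < τ) (φ : ℝ) (B : Finset (Λ × Λ))
    (hheight : ∀ p ∈ B, l p.2 = l p.1 + 1) :
    energy ((q + q⁻¹) / 2) ((1 - q ^ 2) / (1 + q ^ 2)) B (confOf q τ φ l) = 0 := by
  rw [energy_eq_sum_bondEnergy hq]
  exact Finset.sum_eq_zero fun p hp => bondEnergy_confOf hq hτ φ (hheight p hp)

end Kink

section Classification

variable {Λ : Type*} {B : Finset (Λ × Λ)} {q : ℝ} {l : Λ → ℤ}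

lemma eq_pole_of_third_eq {u : Fin 3 → ℝ} (hu : u 0 ^ 2 + u 1 ^ 2 + u 2 ^ 2 = 1) {c : ℝ}
    (hc : u 2 = c) (hc₂ : c ^ 2 = 1) : u = ![0, 0, c] := by
  have h : u 0 ^ 2 + u 1 ^ 2 = 0 := by rw [hc] at hu; linarith
  obtain ⟨h₀, h₁⟩ := (add_eq_zero_iff_of_nonneg (sq_nonneg _) (sq_nonneg _)).1 h
  ext i
  fin_cases i <;> simp_all

lemma exists_forall_eq_sprof (hq : 0 < q) {s : Λ → ℝ} {x₀ : Λ} (h₀ : s x₀ ∈ Ioo (-1) 1)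
    (hpar : ∀ x, (1 - s x) * (q ^ (2 * l x₀) * (1 + s x₀)) =
      (1 - s x₀) * (q ^ (2 * l x) * (1 + s x))) :
    ∃ τ, 0 < τ ∧ ∀ x, s x = sprof q τ (l x) := by
  obtain ⟨h₁, h₂⟩ := h₀
  have h₃ : 0 < 1 + s x₀ := by linarith
  have hd : 0 < q ^ (2 * l x₀) * (1 + s x₀) := by positivity
  refine ⟨(1 - s x₀) / (q ^ (2 * l x₀) * (1 + s x₀)), div_pos (by linarith) hd, fun x => ?_⟩
  have : 0 < q ^ (2 * l x) := by positivity
  rw [sprof_eq_iff (by positivity)]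
  field_simp
  linear_combination hpar x

lemma one_sub_mul_eq_one_sub_mul_of_height
    (hconn : ∀ x y : Λ, Relation.ReflTransGen (fun u v => (u, v) ∈ B ∨ (v, u) ∈ B) x y)
    (hheight : ∀ p ∈ B, l p.2 = l p.1 + 1) (hq : 0 < q) {s : Λ → ℝ}
    (hB : ∀ p ∈ B, q ^ 2 * ((1 - s p.1) * (1 + s p.2)) = (1 + s p.1) * (1 - s p.2)) (x y : Λ) :
    (1 - s x) * (q ^ (2 * l y) * (1 + s y)) = (1 - s y) * (q ^ (2 * l x) * (1 + s x)) := by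
  refine mul_eq_mul_of_reflTransGen (w := fun x => 1 - s x)
    (v := fun x => q ^ (2 * l x) * (1 + s x)) (fun x => ?_) (fun p hp => ?_) (hconn x y)
  · by_contra! h
    have : q ^ (2 * l x) * 2 = 0 := by linear_combination q ^ (2 * l x) * h.1 + h.2
    exact absurd this (by positivity)
  · rw [hheight p hp, zpow_two_mul_add_one hq]
    linear_combination q ^ (2 * l p.1) * hB p hp

lemma exists_eq_confOf_of_third_eq_sprof [Nonempty Λ]
    (hconn : ∀ x y : Λ, Relation.ReflTransGen (fun u v => (u, v) ∈ B ∨ (v, u) ∈ B) x y)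
    (hq : 0 < q) {σ : Λ → Fin 3 → ℝ} (hσ : ∀ x, σ x 0 ^ 2 + σ x 1 ^ 2 + σ x 2 ^ 2 = 1)
    {τ : ℝ} (hτ : 0 < τ) (hs : ∀ x, σ x 2 = sprof q τ (l x))
    (hB : ∀ p ∈ B, σ p.1 0 * σ p.2 0 + σ p.1 1 * σ p.2 1 =
      √(1 - σ p.1 2 ^ 2) * √(1 - σ p.2 2 ^ 2)) :
    ∃ φ, σ = confOf q τ φ l := by
  have hr (x : Λ) : 0 < √(1 - σ x 2 ^ 2) := by
    obtain ⟨h₁, h₂⟩ := sprof_mem_Ioo hq hτ (l x)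
    rw [hs x, sqrt_pos]
    nlinarith
  obtain ⟨φ, hφ⟩ := exists_forall_eq_mul_cos_and_eq_mul_sin hconn hr
    (fun x => sq_add_sq_eq_sqrt_sq (hσ x)) fun p hp => mul_eq_mul_of_add_mul_eq_mul
      (sq_add_sq_eq_sqrt_sq (hσ _)) (sq_add_sq_eq_sqrt_sq (hσ _)) (hB p hp)
  refine ⟨φ, funext fun x => ?_⟩
  ext i
  fin_cases i <;> simp [confOf, ← hs x, (hφ x).1, (hφ x).2]

theorem eq_const_or_eq_confOf_of_energy_eq_zero [Nonempty Λ]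
    (hconn : ∀ x y : Λ, Relation.ReflTransGen (fun u v => (u, v) ∈ B ∨ (v, u) ∈ B) x y)
    (hheight : ∀ p ∈ B, l p.2 = l p.1 + 1) (hq : 0 < q) {σ : Λ → Fin 3 → ℝ}
    (hσ : ∀ x, σ x 0 ^ 2 + σ x 1 ^ 2 + σ x 2 ^ 2 = 1)
    (hE : energy ((q + q⁻¹) / 2) ((1 - q ^ 2) / (1 + q ^ 2)) B σ = 0) :
    σ = (fun _ => ![0, 0, 1]) ∨ σ = (fun _ => ![0, 0, -1]) ∨
      ∃ τ, 0 < τ ∧ ∃ φ, σ = confOf q τ φ l := by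
  rw [energy_eq_sum_bondEnergy hq, Finset.sum_eq_zero_iff_of_nonneg
    fun p _ => bondEnergy_nonneg hq.le (hσ p.1) (hσ p.2)] at hE
  have hB (p) (hp : p ∈ B) := (bondEnergy_eq_zero_iff hq (hσ p.1) (hσ p.2)).1 (hE p hp)
  have hpar := one_sub_mul_eq_one_sub_mul_of_height (s := fun x => σ x 2) hconn hheight hq
    fun p hp => (hB p hp).2
  obtain ⟨x₀⟩ := ‹Nonempty Λ›
  obtain ⟨h₁, h₂⟩ := third_mem_Icc (hσ x₀)
  rcases h₂.eq_or_lt with h₀ | h₂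
  · refine Or.inl (funext fun x => eq_pole_of_third_eq (hσ x) ?_ (by norm_num))
    have h := hpar x x₀
    rw [h₀] at h
    have : (1 - σ x 2) * q ^ (2 * l x₀) = 0 := by linear_combination h / 2
    linarith [(mul_eq_zero_iff_right (by positivity)).1 this]
  rcases h₁.eq_or_lt with h₀ | h₁
  · refine Or.inr (Or.inl (funext fun x => eq_pole_of_third_eq (hσ x) ?_ (by norm_num)))
    have h := hpar x₀ x
    rw [← h₀] at h
    have : q ^ (2 * l x) * (1 + σ x 2) = 0 := by linear_combination h / 2
    linarith [(mul_eq_zero_iff_left (by positivity)).1 this]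
  obtain ⟨τ, hτ, hs⟩ := exists_forall_eq_sprof (s := fun x => σ x 2) hq ⟨h₁, h₂⟩
    fun x => hpar x x₀
  exact Or.inr (Or.inr
    ⟨τ, hτ, exists_eq_confOf_of_third_eq_sprof hconn hq hσ hτ hs fun p hp => (hB p hp).1⟩)

end Classification

end S0

theorem stmt0 {Λ : Type*} [Fintype Λ] [Nonempty Λ] (B : Finset (Λ × Λ))
    (hconn : ∀ x y : Λ, Relation.ReflTransGen (fun u v => (u, v) ∈ B ∨ (v, u) ∈ B) x y)
    (l : Λ → ℤ) (hheight : ∀ p ∈ B, l p.2 = l p.1 + 1)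
    (Δ q : ℝ) (hq0 : 0 < q) (hq1 : q < 1) (hrel : Δ = (q + q⁻¹) / 2)
    (A : ℝ) (hA : A = Real.sqrt (1 - Δ⁻¹ ^ 2)) :
    (ContinuousOn (S0.Mfun q l) (Set.Ioi 0) ∧
      StrictAntiOn (S0.Mfun q l) (Set.Ioi 0) ∧
      Set.BijOn (S0.Mfun q l) (Set.Ioi 0)
        (Set.Ioo (-(Fintype.card Λ : ℝ)) (Fintype.card Λ))) ∧
    (∀ M : ℝ, M ∈ Set.Ioo (-(Fintype.card Λ : ℝ)) (Fintype.card Λ) →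
      ∀ φ τ : ℝ, 0 < τ → S0.Mfun q l τ = M →
        S0.energy Δ A B (S0.confOf q τ φ l) = 0 ∧
        (∑ x, S0.confOf q τ φ l x 2) = M) ∧
    (∀ σ : Λ → Fin 3 → ℝ, (∀ x, (σ x 0) ^ 2 + (σ x 1) ^ 2 + (σ x 2) ^ 2 = 1) →
      S0.energy Δ A B σ = 0 →
        (∀ M : ℝ, (∑ x, σ x 2) = M →
            M ∈ Set.Ioo (-(Fintype.card Λ : ℝ)) (Fintype.card Λ) →
            ∃ τ : ℝ, 0 < τ ∧ S0.Mfun q l τ = M ∧ ∃ φ : ℝ, σ = S0.confOf q τ φ l) ∧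
        ((∑ x, σ x 2) = (Fintype.card Λ : ℝ) → σ = fun _ => ![0, 0, 1]) ∧
        ((∑ x, σ x 2) = -(Fintype.card Λ : ℝ) → σ = fun _ => ![0, 0, -1])) := by
  subst hrel
  rw [S0.sqrt_one_sub_inv_sq hq0 hq1] at hA
  subst hA
  refine ⟨⟨(S0.Mfun_continuousOn hq0).mono Set.Ioi_subset_Ici_self, S0.Mfun_strictAntiOn hq0,
    S0.Mfun_bijOn hq0⟩, fun M _ φ τ hτ hM => ⟨S0.energy_confOf hq0 hτ φ B hheight, ?_⟩,
    fun σ hσ hE => ?_⟩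
  · simpa [S0.confOf, S0.Mfun] using hM
  rcases S0.eq_const_or_eq_confOf_of_energy_eq_zero hconn hheight hq0 hσ hE with
    rfl | rfl | ⟨τ, hτ, φ, rfl⟩
  · simp
  · simp
  · have hsum : ∑ x, S0.confOf q τ φ l x 2 = S0.Mfun q l τ := by simp [S0.confOf, S0.Mfun]
    obtain ⟨hlow, hup⟩ := S0.Mfun_mem_Ioo (l := l) hq0 hτ
    rw [hsum]
    exact ⟨fun M hM _ => ⟨τ, hτ, hM, φ, rfl⟩, fun h => absurd h hup.ne,
      fun h => absurd h hlow.ne'⟩
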